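/- arXiv:math/0407370 — 2 statements merged into one kernel-verified Lean document; each statement's English description precedes it below -/
import Mathlib

section
/- Let k be a field, S a set, and V a k-linear subspace of the space of k-valued functions on S. Let Z and T be finite subsets of S with |Z| = |T| = n and |Z ∩ T| = n − 1 (so |Z ∪ T| = n + 1). Then Z and T both fail to impose independent conditions on V if and only if either (i) Z ∩ T fails to impose independent conditions on V, or (ii) the range of the restriction map V → ((Z ∪ T) → k) has dimension at most n − 1, i.e. the restriction map to Z ∪ T has corank at least 2. -/
open Module

lemma stmt4_key {k V W X : Type*} [Field k] [AddCommGroup V] [Module k V]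
    [AddCommGroup W] [Module k W] [AddCommGroup X] [Module k X]
    [FiniteDimensional k W] [FiniteDimensional k X]
    (f : V →ₗ[k] W) (g : W →ₗ[k] X) (hns : ¬ Function.Surjective f)
    (hs : Function.Surjective (g.comp f))
    (hdim : finrank k W = finrank k X + 1) :
    ∀ v, g (f v) = 0 → f v = 0 := by
  have hmap : (LinearMap.range f).map g = ⊤ := by
    rw [← LinearMap.range_comp, LinearMap.range_eq_top]; exact hs
  have hge : finrank k X ≤ finrank k ↥(LinearMap.range f) := by
    have := Submodule.finrank_map_le g (LinearMap.range f)
    rwa [hmap, finrank_top] at this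
  have hlt : finrank k ↥(LinearMap.range f) < finrank k W := by
    rcases lt_or_eq_of_le (Submodule.finrank_le (LinearMap.range f)) with h | h
    · exact h
    · exact absurd (LinearMap.range_eq_top.mp (Submodule.eq_top_of_finrank_eq h)) hns
  have heq : finrank k ↥(LinearMap.range f) = finrank k X := by omega
  set g' : ↥(LinearMap.range f) →ₗ[k] X := g.comp (LinearMap.range f).subtype with hg'
  have hrg' : LinearMap.range g' = ⊤ := by
    rw [hg', LinearMap.range_comp, Submodule.range_subtype, hmap]
  have hker : LinearMap.ker g' = ⊥ := by
    have hrn := g'.finrank_range_add_finrank_ker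
    rw [hrg', finrank_top, heq] at hrn
    have : finrank k ↥(LinearMap.ker g') = 0 := by omega
    exact Submodule.finrank_eq_zero.mp this
  intro v hv
  have hmem : f v ∈ LinearMap.range f := LinearMap.mem_range_self f v
  have h2 : (⟨f v, hmem⟩ : ↥(LinearMap.range f)) ∈ LinearMap.ker g' := by
    simpa [hg'] using hv
  rw [hker, Submodule.mem_bot] at h2
  exact congrArg Subtype.val h2

/-- Let `Z, T` be finite subsets of `S` with `|Z| = |T| = n` and
`|Z ∩ T| = n - 1`. Then `Z` and `T` both fail to impose independent conditions on `V`
iff either `Z ∩ T` fails to impose independent conditions on `V`, or the restriction map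
`V → ((Z ∪ T) → k)` has corank at least `2`, i.e. its range has dimension at most
`n - 1 = |Z ∪ T| - 2`. -/
theorem stmt4 {k S : Type*} [Field k] [DecidableEq S] (V : Submodule k (S → k))
    (Z T : Finset S) (n : ℕ)
    (hZcard : Z.card = n) (hTcard : T.card = n) (hZT : (Z ∩ T).card = n - 1)
    (hU : (Z ∪ T).card = n + 1)
    (resZ : ↥V →ₗ[k] ({x : S // x ∈ Z} → k))
    (hresZ : resZ = (LinearMap.funLeft k k
      (fun q : {x : S // x ∈ Z} => (q : S))).comp V.subtype)
    (resT : ↥V →ₗ[k] ({x : S // x ∈ T} → k))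
    (hresT : resT = (LinearMap.funLeft k k
      (fun q : {x : S // x ∈ T} => (q : S))).comp V.subtype)
    (resZT : ↥V →ₗ[k] ({x : S // x ∈ Z ∩ T} → k))
    (hresZT : resZT = (LinearMap.funLeft k k
      (fun q : {x : S // x ∈ Z ∩ T} => (q : S))).comp V.subtype)
    (resU : ↥V →ₗ[k] ({x : S // x ∈ Z ∪ T} → k))
    (hresU : resU = (LinearMap.funLeft k k
      (fun q : {x : S // x ∈ Z ∪ T} => (q : S))).comp V.subtype) :
    (¬ Function.Surjective resZ ∧ ¬ Function.Surjective resT) ↔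
      (¬ Function.Surjective resZT ∨
        Module.finrank k ↥(LinearMap.range resU) ≤ n - 1) := by
  subst hresZ hresT hresZT hresU
  -- basic dimension facts
  have hn : 1 ≤ n := by
    have := Finset.card_union_le Z T
    omega
  have hdZ : finrank k ({x : S // x ∈ Z} → k) = n := by
    rw [Module.finrank_fintype_fun_eq_card, Fintype.card_coe, hZcard]
  have hdT : finrank k ({x : S // x ∈ T} → k) = n := by
    rw [Module.finrank_fintype_fun_eq_card, Fintype.card_coe, hTcard]
  have hdZT : finrank k ({x : S // x ∈ Z ∩ T} → k) = n - 1 := by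
    rw [Module.finrank_fintype_fun_eq_card, Fintype.card_coe, hZT]
  -- transition maps
  set gZ : ({x : S // x ∈ Z} → k) →ₗ[k] ({x : S // x ∈ Z ∩ T} → k) :=
    LinearMap.funLeft k k
      (fun q : {x : S // x ∈ Z ∩ T} =>
        (⟨(q : S), (Finset.mem_inter.mp q.2).1⟩ : {x : S // x ∈ Z})) with hgZ
  set gT : ({x : S // x ∈ T} → k) →ₗ[k] ({x : S // x ∈ Z ∩ T} → k) :=
    LinearMap.funLeft k k
      (fun q : {x : S // x ∈ Z ∩ T} =>
        (⟨(q : S), (Finset.mem_inter.mp q.2).2⟩ : {x : S // x ∈ T})) with hgT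
  set gUZ : ({x : S // x ∈ Z ∪ T} → k) →ₗ[k] ({x : S // x ∈ Z} → k) :=
    LinearMap.funLeft k k
      (fun q : {x : S // x ∈ Z} =>
        (⟨(q : S), Finset.mem_union_left T q.2⟩ : {x : S // x ∈ Z ∪ T})) with hgUZ
  set gUT : ({x : S // x ∈ Z ∪ T} → k) →ₗ[k] ({x : S // x ∈ T} → k) :=
    LinearMap.funLeft k k
      (fun q : {x : S // x ∈ T} =>
        (⟨(q : S), Finset.mem_union_right Z q.2⟩ : {x : S // x ∈ Z ∪ T})) with hgUT
  set gUZT : ({x : S // x ∈ Z ∪ T} → k) →ₗ[k] ({x : S // x ∈ Z ∩ T} → k) :=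
    LinearMap.funLeft k k
      (fun q : {x : S // x ∈ Z ∩ T} =>
        (⟨(q : S), Finset.mem_union_left T (Finset.mem_inter.mp q.2).1⟩ :
          {x : S // x ∈ Z ∪ T})) with hgUZT
  set rZ := (LinearMap.funLeft k k (fun q : {x : S // x ∈ Z} => (q : S))).comp V.subtype
  set rT := (LinearMap.funLeft k k (fun q : {x : S // x ∈ T} => (q : S))).comp V.subtype
  set rZT := (LinearMap.funLeft k k (fun q : {x : S // x ∈ Z ∩ T} => (q : S))).comp V.subtype
  set rU := (LinearMap.funLeft k k (fun q : {x : S // x ∈ Z ∪ T} => (q : S))).comp V.subtype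
  have hcZ : rZT = gZ.comp rZ := rfl
  have hcT : rZT = gT.comp rT := rfl
  have hcUZ : rZ = gUZ.comp rU := rfl
  have hcUT : rT = gUT.comp rU := rfl
  have hcUZT : rZT = gUZT.comp rU := rfl
  haveI : FiniteDimensional k ↥(LinearMap.range rU) :=
    FiniteDimensional.finiteDimensional_submodule _
  constructor
  · rintro ⟨hZns, hTns⟩
    by_cases hZTs : Function.Surjective rZT
    · right
      have hdimZ : finrank k ({x : S // x ∈ Z} → k)
          = finrank k ({x : S // x ∈ Z ∩ T} → k) + 1 := by omega
      have hdimT : finrank k ({x : S // x ∈ T} → k)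
          = finrank k ({x : S // x ∈ Z ∩ T} → k) + 1 := by omega
      have hZinj := stmt4_key rZ gZ hZns (hcZ ▸ hZTs) hdimZ
      have hTinj := stmt4_key rT gT hTns (hcT ▸ hZTs) hdimT
      -- ker rU = ker rZT
      have hkereq : LinearMap.ker rU = LinearMap.ker rZT := by
        apply le_antisymm
        · intro v hv
          rw [LinearMap.mem_ker] at hv ⊢
          rw [hcUZT, LinearMap.comp_apply, hv, map_zero]
        · intro v hv
          rw [LinearMap.mem_ker] at hv ⊢
          have h1 : rZ v = 0 := hZinj v (by rw [← LinearMap.comp_apply, ← hcZ]; exact hv)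
          have h2 : rT v = 0 := hTinj v (by rw [← LinearMap.comp_apply, ← hcT]; exact hv)
          funext q
          rcases Finset.mem_union.mp q.2 with hq | hq
          · exact congrFun h1 ⟨q, hq⟩
          · exact congrFun h2 ⟨q, hq⟩
      have e1 := (rU.quotKerEquivRange).symm.finrank_eq
      have e2 := (rZT.quotKerEquivRange).finrank_eq
      have hZTtop : LinearMap.range rZT = ⊤ := LinearMap.range_eq_top.mpr hZTs
      rw [hkereq] at e1
      have : finrank k ↥(LinearMap.range rU) = finrank k ↥(LinearMap.range rZT) := by
        rw [e1, e2]
      rw [this, hZTtop, finrank_top, hdZT]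
    · exact Or.inl hZTs
  · rintro (hZTns | hle)
    · constructor
      · intro hs
        exact hZTns (by
          rw [hcZ, hgZ, LinearMap.coe_comp]
          exact (LinearMap.funLeft_surjective_of_injective k k
            (fun q : {x : S // x ∈ Z ∩ T} =>
              (⟨(q : S), (Finset.mem_inter.mp q.2).1⟩ : {x : S // x ∈ Z}))
            (fun a b hab => Subtype.ext (by have h := congrArg Subtype.val hab; exact h))).comp hs)
      · intro hs
        exact hZTns (by
          rw [hcT, hgT, LinearMap.coe_comp]
          exact (LinearMap.funLeft_surjective_of_injective k k
            (fun q : {x : S // x ∈ Z ∩ T} =>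
              (⟨(q : S), (Finset.mem_inter.mp q.2).2⟩ : {x : S // x ∈ T}))
            (fun a b hab => Subtype.ext (by have h := congrArg Subtype.val hab; exact h))).comp hs)
    · constructor
      · intro hs
        have htop : LinearMap.range rZ = ⊤ := LinearMap.range_eq_top.mpr hs
        have hm : (LinearMap.range rU).map gUZ = LinearMap.range rZ := by
          rw [← LinearMap.range_comp, ← hcUZ]
        have := Submodule.finrank_map_le gUZ (LinearMap.range rU)
        rw [hm, htop, finrank_top, hdZ] at this
        omega
      · intro hs
        have htop : LinearMap.range rT = ⊤ := LinearMap.range_eq_top.mpr hs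
        have hm : (LinearMap.range rU).map gUT = LinearMap.range rT := by
          rw [← LinearMap.range_comp, ← hcUT]
        have := Submodule.finrank_map_le gUT (LinearMap.range rU)
        rw [hm, htop, finrank_top, hdT] at this
        omega
end

section
/- Let g ≥ 1 and d ≥ 1 be integers, and write d − 1 = m·g + ε with m = ⌊(d−1)/g⌋ and 0 ≤ ε < g. Let β : ℕ → ℤ be a sequence satisfying β(1) = 1 and β(l) − β(l−1) ≥ min{ d, (l−1)·g + 1 } for every l ≥ 2. Suppose γ is an integer such that for some integer k ≥ 0 one has β(m + 1 + k) ≤ (m + 1 + k)·d − γ + 1. Then γ ≤ C(m+1, 2)·g + (m+1)·ε + 1, where C(m+1, 2) = m(m+1)/2 is the binomial coefficient. -/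
/-!
The lower bound `min d ((l - 1) g + 1)` on the increments of `β` equals `(l - 1) g + 1` up to
`l = m + 1` and equals `d` from then on, because `d = m g + ε + 1` with `ε < g`. Telescoping gives
`β (m + 1) ≥ 1 + m + C(m+1, 2) g` and then `β (m + 1 + k) ≥ β (m + 1) + k d`; comparing with the
upper bound `(m + 1 + k) d - γ + 1` isolates `γ`.
-/

open Finset

theorem add_sum_le_of_le_sub {G : Type*} [AddCommGroup G] [PartialOrder G]
    [IsOrderedAddMonoid G] {β c : ℕ → G} {a n : ℕ}
    (h : ∀ i < n, c i ≤ β (a + i + 1) - β (a + i)) :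
    β a + ∑ i ∈ range n, c i ≤ β (a + n) := by
  have hsum := sum_le_sum fun i hi => h i (mem_range.1 hi)
  have telescoped := hsum.trans_eq (sum_range_sub (fun i => β (a + i)) n)
  rw [add_zero] at telescoped
  exact le_sub_iff_add_le'.1 telescoped

theorem sum_range_add_one_mul_add_one {R : Type*} [CommSemiring R] (g : R) (m : ℕ) :
    ∑ i ∈ range m, (((i : R) + 1) * g + 1) = (m + 1).choose 2 * g + m := by
  induction m with
  | zero => simp
  | succ m ih =>
    rw [sum_range_succ, ih, Nat.choose_succ_succ' (m + 1), Nat.choose_one_right]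
    push_cast
    ring

theorem two_mul_add_one_choose_two {R : Type*} [CommSemiring R] (m : ℕ) :
    2 * ((m + 1).choose 2 : R) = (m + 1) * m := by
  have h : (m + 1) * m = (m + 1).choose 2 * 2 := by
    simpa using Nat.add_one_mul_choose_eq m 1
  rw [mul_comm 2]
  exact_mod_cast (congrArg (Nat.cast : ℕ → R) h).symm

theorem stmt6_general (g d m ε : ℕ) (hd : 1 ≤ d)
    (hε : ε < g) (hdec : d - 1 = m * g + ε)
    (β : ℕ → ℤ)
    (hβ1 : β 1 = 1)
    (hβ : ∀ l : ℕ, 2 ≤ l → β l - β (l - 1) ≥ min (d : ℤ) (((l : ℤ) - 1) * g + 1))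
    (γ : ℤ)
    (hγ : ∃ k : ℕ, β (m + 1 + k) ≤ ((m : ℤ) + 1 + k) * d - γ + 1) :
    γ ≤ ((m + 1).choose 2 : ℤ) * g + (m + 1) * ε + 1 := by
  obtain ⟨k, hk⟩ := hγ
  have hd_eq : (d : ℤ) = m * g + ε + 1 := by omega
  have step (l : ℕ) (hl : 1 ≤ l) : min (d : ℤ) (l * g + 1) ≤ β (1 + l) - β l := by
    have h := hβ (1 + l) (by omega)
    rw [Nat.add_sub_cancel_left] at h
    push_cast at h
    simpa using h
  have low : β 1 + ∑ i ∈ range m, (((i : ℤ) + 1) * g + 1) ≤ β (1 + m) :=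
    add_sum_le_of_le_sub (a := 1) fun i hi => by
      have hle : ((i : ℤ) + 1) * g + 1 ≤ d := by
        rw [hd_eq]
        have : ((i : ℤ) + 1) * g ≤ m * g := by gcongr; exact_mod_cast hi
        linarith
      have h := step (1 + i) (by omega)
      push_cast at h
      rwa [add_comm 1 (i : ℤ), min_eq_right hle, add_comm 1 (1 + i)] at h
  have high : β (m + 1) + ∑ _i ∈ range k, (d : ℤ) ≤ β (m + 1 + k) :=
    add_sum_le_of_le_sub fun i _ => by
      have hle : (d : ℤ) ≤ (m + 1 + i : ℕ) * g + 1 := by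
        rw [hd_eq]; push_cast
        nlinarith
      have h := step (m + 1 + i) (by omega)
      rwa [min_eq_left hle, add_comm 1 (m + 1 + i)] at h
  rw [sum_range_add_one_mul_add_one, hβ1, add_comm 1 m] at low
  rw [sum_const, card_range, nsmul_eq_mul] at high
  have hC := two_mul_add_one_choose_two (R := ℤ) m
  rw [hd_eq] at hk high
  linear_combination hk + high + low - (g : ℤ) * hC

/-- Numerical skeleton of Theorem B (the Castelnuovo-type genus bound).
Write `d - 1 = m * g + ε` with `0 ≤ ε < g`. If `β 1 = 1`,
`β l - β (l-1) ≥ min d ((l-1) * g + 1)` for all `l ≥ 2`, and for some `k ≥ 0` one has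
`β (m + 1 + k) ≤ (m + 1 + k) * d - γ + 1`, then
`γ ≤ C(m+1, 2) * g + (m+1) * ε + 1`. -/
theorem stmt6 (g d m ε : ℕ) (hg : 1 ≤ g) (hd : 1 ≤ d)
    (hm : m = (d - 1) / g) (hε : ε < g) (hdec : d - 1 = m * g + ε)
    (β : ℕ → ℤ)
    (hβ1 : β 1 = 1)
    (hβ : ∀ l : ℕ, 2 ≤ l → β l - β (l - 1) ≥ min (d : ℤ) (((l : ℤ) - 1) * g + 1))
    (γ : ℤ)
    (hγ : ∃ k : ℕ, β (m + 1 + k) ≤ ((m : ℤ) + 1 + k) * d - γ + 1) :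
    γ ≤ ((m + 1).choose 2 : ℤ) * g + (m + 1) * ε + 1 :=
  stmt6_general g d m ε hd hε hdec β hβ1 hβ γ hγ
end
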